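/- The regular grammar G' generates exactly the language L₀: for every string w over Σ, w is derivable from the start symbol S in G' if and only if w ∈ L₀. -/

import Mathlib

/-- The five-letter terminal alphabet Σ = {♯, 0, 1, p, p̄}. -/
inductive Sig where
  | hash | zero | one | pos | neg
deriving DecidableEq, Repr

instance : Fintype Sig :=
  ⟨{.hash, .zero, .one, .pos, .neg}, fun x => by cases x <;> simp⟩

/-- The nonterminals of the regular grammar G'. -/
inductive NTm where
  | S | F | T | A | B
deriving DecidableEq, Repr

instance : Fintype NTm :=
  ⟨{.S, .F, .T, .A, .B}, fun x => by cases x <;> simp⟩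

instance : DecidableEq (ContextFreeRule Sig NTm) :=
  fun a b => decidable_of_iff (a.input = b.input ∧ a.output = b.output)
    (by cases a; cases b; simp)

/-- The productions of the right-linear regular grammar G'. -/
def rulesG' : List (ContextFreeRule Sig NTm) := [
  ⟨.S, [.terminal .hash, .nonterminal .F]⟩,
  ⟨.S, [.terminal .hash, .nonterminal .T]⟩,
  ⟨.S, []⟩,
  ⟨.F, [.terminal .zero, .nonterminal .F]⟩,
  ⟨.F, [.terminal .one, .nonterminal .F]⟩,
  ⟨.F, [.terminal .pos, .nonterminal .F]⟩,
  ⟨.F, [.terminal .neg, .nonterminal .F]⟩,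
  ⟨.F, [.terminal .pos, .nonterminal .T]⟩,
  ⟨.F, [.terminal .neg, .nonterminal .T]⟩,
  ⟨.T, [.terminal .zero, .nonterminal .T]⟩,
  ⟨.T, [.terminal .one, .nonterminal .T]⟩,
  ⟨.T, [.terminal .pos, .nonterminal .A]⟩,
  ⟨.T, [.terminal .neg, .nonterminal .A]⟩,
  ⟨.A, [.nonterminal .B]⟩,
  ⟨.A, [.nonterminal .S]⟩,
  ⟨.B, [.terminal .zero, .nonterminal .B]⟩,
  ⟨.B, [.terminal .one, .nonterminal .B]⟩,
  ⟨.B, [.terminal .pos, .nonterminal .A]⟩,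
  ⟨.B, [.terminal .neg, .nonterminal .A]⟩ ]

/-- The regular grammar G' (as a context-free grammar) with start symbol S. -/
def Gp : ContextFreeGrammar Sig := { NT := NTm, initial := NTm.S, rules := rulesG'.toFinset }

/-- A symbol of Σ is a bit, i.e. 0 or 1. -/
def IsBit (c : Sig) : Prop := c = .zero ∨ c = .one

/-- A segment: a (possibly empty) string over {0,1} followed by a single p or p̄. -/
def IsSegment (s : List Sig) : Prop :=
  ∃ u l, s = u ++ [l] ∧ (∀ c ∈ u, IsBit c) ∧ (l = Sig.pos ∨ l = Sig.neg)

/-- A block: ♯ followed by one or more segments. -/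
def IsBlock (b : List Sig) : Prop :=
  ∃ segs : List (List Sig), segs ≠ [] ∧ (∀ s ∈ segs, IsSegment s) ∧ b = Sig.hash :: segs.flatten

/-- The regular language L₀ = (♯((0∪1)*(p∪p̄))⁺)*. -/
def L0 : Set (List Sig) :=
  { w | ∃ bs : List (List Sig), (∀ b ∈ bs, IsBlock b) ∧ w = bs.flatten }

namespace GramProof

open ContextFreeGrammar

abbrev Sym := Symbol Sig NTm

instance : DecidableEq (ContextFreeRule Sig Gp.NT) :=
  inferInstanceAs (DecidableEq (ContextFreeRule Sig NTm))

/-- Denotation of A: zero or more segments followed by a word of L0. -/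
def DA : Set (List Sig) :=
  {w | ∃ segs s, (∀ x ∈ segs, IsSegment x) ∧ s ∈ L0 ∧ w = (segs : List (List Sig)).flatten ++ s}

/-- Denotation of T: one or more segments followed by a word of L0. -/
def DT : Set (List Sig) :=
  {w | ∃ segs s, segs ≠ [] ∧ (∀ x ∈ segs, IsSegment x) ∧ s ∈ L0 ∧
    w = (segs : List (List Sig)).flatten ++ s}

/-- Denotation of B: a segment followed by a word of DA. -/
def DB : Set (List Sig) :=
  {w | ∃ u l w', (∀ c ∈ u, IsBit c) ∧ (l = Sig.pos ∨ l = Sig.neg) ∧ w' ∈ DA ∧ w = u ++ l :: w'}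

/-- Denotation of F. -/
def DF : Set (List Sig) :=
  {w | ∃ u l w', (∀ c ∈ u, c ≠ Sig.hash) ∧ (l = Sig.pos ∨ l = Sig.neg) ∧ w' ∈ DT ∧
    w = u ++ l :: w'}

def DN : NTm → Set (List Sig)
  | .S => L0
  | .F => DF
  | .T => DT
  | .A => DA
  | .B => DB

def SetE : Sym → Set (List Sig)
  | .terminal a => {[a]}
  | .nonterminal n => DN n

def LangL : List Sym → Set (List Sig)
  | [] => {[]}
  | s :: α => {w | ∃ x y, x ∈ SetE s ∧ y ∈ LangL α ∧ w = x ++ y}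

lemma langL_append {w : List Sig} : ∀ (α β : List Sym),
    (w ∈ LangL (α ++ β) ↔ ∃ x y, x ∈ LangL α ∧ y ∈ LangL β ∧ w = x ++ y) := by
  intro α
  induction α generalizing w with
  | nil => intro β; simp [LangL]
  | cons s α ih =>
    intro β
    constructor
    · rintro ⟨x, y, hx, hy, rfl⟩
      rcases (ih (w := y) β).1 hy with ⟨y1, y2, h1, h2, rfl⟩
      exact ⟨x ++ y1, y2, ⟨x, y1, hx, h1, rfl⟩, h2, by simp⟩
    · rintro ⟨x, y, ⟨x1, x2, hx1, hx2, rfl⟩, hy, rfl⟩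
      exact ⟨x1, x2 ++ y, hx1, (ih _).2 ⟨x2, y, hx2, hy, rfl⟩, by simp⟩

lemma self_mem_langL : ∀ w : List Sig, w ∈ LangL (w.map Symbol.terminal) := by
  intro w
  induction w with
  | nil => simp [LangL]
  | cons c w ih => exact ⟨[c], w, rfl, ih, rfl⟩

lemma seg_cons_bit {c : Sig} {s : List Sig} (hc : IsBit c) (hs : IsSegment s) :
    IsSegment (c :: s) := by
  obtain ⟨u, l, rfl, hu, hl⟩ := hs
  exact ⟨c :: u, l, rfl, List.forall_mem_cons.mpr ⟨hc, hu⟩, hl⟩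

lemma split_segs : ∀ (u : List Sig), (∀ c ∈ u, c ≠ Sig.hash) →
    ∀ l, (l = Sig.pos ∨ l = Sig.neg) →
    ∃ segs : List (List Sig), segs ≠ [] ∧ (∀ s ∈ segs, IsSegment s) ∧ u ++ [l] = segs.flatten := by
  intro u
  induction u with
  | nil =>
    intro _ l hl
    refine ⟨[[l]], by simp, ?_, by simp⟩
    intro x hx
    rw [List.mem_singleton] at hx
    subst hx
    exact ⟨[], l, by simp, by simp, hl⟩
  | cons c u ih =>
    intro hc l hl
    obtain ⟨segs, hne, hsegs, hflat⟩ := ih (fun d hd => hc d (by simp [hd])) l hl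
    match segs, hne with
    | s0 :: rest, _ =>
      have hs0 : IsSegment s0 := hsegs s0 (by simp)
      have hc' : c ≠ Sig.hash := hc c (by simp)
      cases c with
      | hash => exact absurd rfl hc'
      | zero =>
        refine ⟨(Sig.zero :: s0) :: rest, by simp, ?_, ?_⟩
        · exact List.forall_mem_cons.mpr ⟨seg_cons_bit (Or.inl rfl) hs0,
            fun x hx => hsegs x (by simp [hx])⟩
        · simpa using congrArg (Sig.zero :: ·) hflat
      | one =>
        refine ⟨(Sig.one :: s0) :: rest, by simp, ?_, ?_⟩
        · exact List.forall_mem_cons.mpr ⟨seg_cons_bit (Or.inr rfl) hs0,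
            fun x hx => hsegs x (by simp [hx])⟩
        · simpa using congrArg (Sig.one :: ·) hflat
      | pos =>
        refine ⟨[Sig.pos] :: s0 :: rest, by simp, ?_, ?_⟩
        · exact List.forall_mem_cons.mpr ⟨⟨[], Sig.pos, by simp, by simp, Or.inl rfl⟩, hsegs⟩
        · simpa using congrArg (Sig.pos :: ·) hflat
      | neg =>
        refine ⟨[Sig.neg] :: s0 :: rest, by simp, ?_, ?_⟩
        · exact List.forall_mem_cons.mpr ⟨⟨[], Sig.neg, by simp, by simp, Or.inr rfl⟩, hsegs⟩
        · simpa using congrArg (Sig.neg :: ·) hflat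

/-- Closure of the denotations under each production rule. -/
lemma rule_closure : ∀ r ∈ rulesG', ∀ w ∈ LangL r.output, w ∈ DN r.input := by
  intro r hr w hw
  simp only [rulesG', List.mem_cons, List.not_mem_nil, or_false] at hr
  rcases hr with rfl|rfl|rfl|rfl|rfl|rfl|rfl|rfl|rfl|rfl|rfl|rfl|rfl|rfl|rfl|rfl|rfl|rfl|rfl
  -- S → ♯F
  · obtain ⟨x, y, hx, ⟨y1, y2, hy1, hy2, rfl⟩, rfl⟩ := hw
    cases hx
    cases (show (y2 : List Sig) = [] from hy2)
    obtain ⟨u, l, w', hu, hl, hw', rfl⟩ := hy1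
    obtain ⟨segs1, hne1, hsegs1, hflat1⟩ := split_segs u hu l hl
    obtain ⟨segs2, s, hne2, hsegs2, ⟨bs, hbs, rfl⟩, rfl⟩ := hw'
    refine ⟨(Sig.hash :: (segs1 ++ segs2).flatten) :: bs, ?_, by simp [← hflat1]⟩
    refine List.forall_mem_cons.mpr ⟨?_, hbs⟩
    exact ⟨segs1 ++ segs2, by simp [hne1], by
      intro s hs; rcases List.mem_append.1 hs with h | h
      exacts [hsegs1 s h, hsegs2 s h], rfl⟩
  -- S → ♯T
  · obtain ⟨x, y, hx, ⟨y1, y2, hy1, hy2, rfl⟩, rfl⟩ := hw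
    cases hx
    cases (show (y2 : List Sig) = [] from hy2)
    obtain ⟨segs, s, hne, hsegs, ⟨bs, hbs, rfl⟩, rfl⟩ := hy1
    refine ⟨(Sig.hash :: segs.flatten) :: bs, ?_, by simp⟩
    exact List.forall_mem_cons.mpr ⟨⟨segs, hne, hsegs, rfl⟩, hbs⟩
  -- S → ε
  · cases (show (w : List Sig) = [] from hw)
    exact ⟨[], by simp, rfl⟩
  -- F → 0F
  · obtain ⟨x, y, hx, ⟨y1, y2, hy1, hy2, rfl⟩, rfl⟩ := hw
    cases hx
    cases (show (y2 : List Sig) = [] from hy2)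
    obtain ⟨u, l, w', hu, hl, hw', rfl⟩ := hy1
    exact ⟨Sig.zero :: u, l, w',
      List.forall_mem_cons.mpr ⟨by simp, hu⟩, hl, hw', by simp⟩
  -- F → 1F
  · obtain ⟨x, y, hx, ⟨y1, y2, hy1, hy2, rfl⟩, rfl⟩ := hw
    cases hx
    cases (show (y2 : List Sig) = [] from hy2)
    obtain ⟨u, l, w', hu, hl, hw', rfl⟩ := hy1
    exact ⟨Sig.one :: u, l, w',
      List.forall_mem_cons.mpr ⟨by simp, hu⟩, hl, hw', by simp⟩
  -- F → pF
  · obtain ⟨x, y, hx, ⟨y1, y2, hy1, hy2, rfl⟩, rfl⟩ := hw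
    cases hx
    cases (show (y2 : List Sig) = [] from hy2)
    obtain ⟨u, l, w', hu, hl, hw', rfl⟩ := hy1
    exact ⟨Sig.pos :: u, l, w',
      List.forall_mem_cons.mpr ⟨by simp, hu⟩, hl, hw', by simp⟩
  -- F → p̄F
  · obtain ⟨x, y, hx, ⟨y1, y2, hy1, hy2, rfl⟩, rfl⟩ := hw
    cases hx
    cases (show (y2 : List Sig) = [] from hy2)
    obtain ⟨u, l, w', hu, hl, hw', rfl⟩ := hy1
    exact ⟨Sig.neg :: u, l, w',
      List.forall_mem_cons.mpr ⟨by simp, hu⟩, hl, hw', by simp⟩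
  -- F → pT
  · obtain ⟨x, y, hx, ⟨y1, y2, hy1, hy2, rfl⟩, rfl⟩ := hw
    cases hx
    cases (show (y2 : List Sig) = [] from hy2)
    exact ⟨[], Sig.pos, y1, by simp, Or.inl rfl, hy1, by simp⟩
  -- F → p̄T
  · obtain ⟨x, y, hx, ⟨y1, y2, hy1, hy2, rfl⟩, rfl⟩ := hw
    cases hx
    cases (show (y2 : List Sig) = [] from hy2)
    exact ⟨[], Sig.neg, y1, by simp, Or.inr rfl, hy1, by simp⟩
  -- T → 0T
  · obtain ⟨x, y, hx, ⟨y1, y2, hy1, hy2, rfl⟩, rfl⟩ := hw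
    cases hx
    cases (show (y2 : List Sig) = [] from hy2)
    obtain ⟨segs, s, hne, hsegs, hs, rfl⟩ := hy1
    match segs, hne with
    | s0 :: rest, _ =>
      refine ⟨(Sig.zero :: s0) :: rest, s, by simp, ?_, hs, by simp⟩
      exact List.forall_mem_cons.mpr ⟨seg_cons_bit (Or.inl rfl) (hsegs s0 (by simp)),
        fun x hx => hsegs x (by simp [hx])⟩
  -- T → 1T
  · obtain ⟨x, y, hx, ⟨y1, y2, hy1, hy2, rfl⟩, rfl⟩ := hw
    cases hx
    cases (show (y2 : List Sig) = [] from hy2)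
    obtain ⟨segs, s, hne, hsegs, hs, rfl⟩ := hy1
    match segs, hne with
    | s0 :: rest, _ =>
      refine ⟨(Sig.one :: s0) :: rest, s, by simp, ?_, hs, by simp⟩
      exact List.forall_mem_cons.mpr ⟨seg_cons_bit (Or.inr rfl) (hsegs s0 (by simp)),
        fun x hx => hsegs x (by simp [hx])⟩
  -- T → pA
  · obtain ⟨x, y, hx, ⟨y1, y2, hy1, hy2, rfl⟩, rfl⟩ := hw
    cases hx
    cases (show (y2 : List Sig) = [] from hy2)
    obtain ⟨segs, s, hsegs, hs, rfl⟩ := hy1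
    refine ⟨[Sig.pos] :: segs, s, by simp, ?_, hs, by simp⟩
    exact List.forall_mem_cons.mpr ⟨⟨[], Sig.pos, by simp, by simp, Or.inl rfl⟩, hsegs⟩
  -- T → p̄A
  · obtain ⟨x, y, hx, ⟨y1, y2, hy1, hy2, rfl⟩, rfl⟩ := hw
    cases hx
    cases (show (y2 : List Sig) = [] from hy2)
    obtain ⟨segs, s, hsegs, hs, rfl⟩ := hy1
    refine ⟨[Sig.neg] :: segs, s, by simp, ?_, hs, by simp⟩
    exact List.forall_mem_cons.mpr ⟨⟨[], Sig.neg, by simp, by simp, Or.inr rfl⟩, hsegs⟩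
  -- A → B
  · obtain ⟨x, y, hx, hy, rfl⟩ := hw
    cases (show (y : List Sig) = [] from hy)
    obtain ⟨u, l, w', hu, hl, ⟨segs, s, hsegs, hs, rfl⟩, rfl⟩ := hx
    refine ⟨(u ++ [l]) :: segs, s, ?_, hs, by simp⟩
    exact List.forall_mem_cons.mpr ⟨⟨u, l, rfl, hu, hl⟩, hsegs⟩
  -- A → S
  · obtain ⟨x, y, hx, hy, rfl⟩ := hw
    cases (show (y : List Sig) = [] from hy)
    exact ⟨[], x, by simp, hx, by simp⟩
  -- B → 0B
  · obtain ⟨x, y, hx, ⟨y1, y2, hy1, hy2, rfl⟩, rfl⟩ := hw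
    cases hx
    cases (show (y2 : List Sig) = [] from hy2)
    obtain ⟨u, l, w', hu, hl, hw', rfl⟩ := hy1
    exact ⟨Sig.zero :: u, l, w',
      List.forall_mem_cons.mpr ⟨Or.inl rfl, hu⟩, hl, hw', by simp⟩
  -- B → 1B
  · obtain ⟨x, y, hx, ⟨y1, y2, hy1, hy2, rfl⟩, rfl⟩ := hw
    cases hx
    cases (show (y2 : List Sig) = [] from hy2)
    obtain ⟨u, l, w', hu, hl, hw', rfl⟩ := hy1
    exact ⟨Sig.one :: u, l, w',
      List.forall_mem_cons.mpr ⟨Or.inr rfl, hu⟩, hl, hw', by simp⟩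
  -- B → pA
  · obtain ⟨x, y, hx, ⟨y1, y2, hy1, hy2, rfl⟩, rfl⟩ := hw
    cases hx
    cases (show (y2 : List Sig) = [] from hy2)
    exact ⟨[], Sig.pos, y1, by simp, Or.inl rfl, hy1, by simp⟩
  -- B → p̄A
  · obtain ⟨x, y, hx, ⟨y1, y2, hy1, hy2, rfl⟩, rfl⟩ := hw
    cases hx
    cases (show (y2 : List Sig) = [] from hy2)
    exact ⟨[], Sig.neg, y1, by simp, Or.inr rfl, hy1, by simp⟩

lemma produces_sub {α β : List Sym} (h : Gp.Produces α β) : LangL β ⊆ LangL α := by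
  obtain ⟨r, hr, hrw⟩ := h
  obtain ⟨p, q, rfl, rfl⟩ := hrw.exists_parts
  intro w hw
  rw [List.append_assoc] at hw ⊢
  rcases (langL_append _ _).1 hw with ⟨x, y, hx, hy, rfl⟩
  rcases (langL_append _ _).1 hy with ⟨y1, y2, hy1, hy2, rfl⟩
  have hy1' : y1 ∈ DN r.input := rule_closure r (List.mem_toFinset.mp hr) y1 hy1
  refine (langL_append _ _).2 ⟨x, y1 ++ y2, hx, ?_, rfl⟩
  exact (langL_append _ _).2 ⟨y1, y2, ⟨y1, [], hy1', rfl, by simp⟩, hy2, rfl⟩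

lemma derives_sub {α β : List Sym} (h : Gp.Derives α β) : LangL β ⊆ LangL α := by
  induction h with
  | refl => exact fun _ h => h
  | tail _ hstep ih => exact fun w hw => ih (produces_sub hstep hw)

/-! ### Completeness -/

lemma prodRule (r : ContextFreeRule Sig NTm) (h : r ∈ rulesG') :
    Gp.Produces [Symbol.nonterminal r.input] r.output :=
  ⟨r, List.mem_toFinset.mpr h, ContextFreeRule.Rewrites.input_output⟩

lemma derB_bits {u : List Sig} (hu : ∀ c ∈ u, IsBit c) {ω : List Sym}
    (hω : Gp.Derives [Symbol.nonterminal NTm.B] ω) :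
    Gp.Derives [Symbol.nonterminal NTm.B] (u.map Symbol.terminal ++ ω) := by
  induction u with
  | nil => simpa [Gp] using hω
  | cons c u ih =>
    have ih' := ih (fun d hd => hu d (by simp [hd]))
    rcases hu c (by simp) with rfl | rfl
    · exact ((prodRule ⟨.B, [.terminal .zero, .nonterminal .B]⟩ (by simp [rulesG'])).trans_derives
        (by exact ih'.append_left [Symbol.terminal Sig.zero]))
    · exact ((prodRule ⟨.B, [.terminal .one, .nonterminal .B]⟩ (by simp [rulesG'])).trans_derives
        (by exact ih'.append_left [Symbol.terminal Sig.one]))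

lemma derT_bits {u : List Sig} (hu : ∀ c ∈ u, IsBit c) {ω : List Sym}
    (hω : Gp.Derives [Symbol.nonterminal NTm.T] ω) :
    Gp.Derives [Symbol.nonterminal NTm.T] (u.map Symbol.terminal ++ ω) := by
  induction u with
  | nil => simpa [Gp] using hω
  | cons c u ih =>
    have ih' := ih (fun d hd => hu d (by simp [hd]))
    rcases hu c (by simp) with rfl | rfl
    · exact ((prodRule ⟨.T, [.terminal .zero, .nonterminal .T]⟩ (by simp [rulesG'])).trans_derives
        (by exact ih'.append_left [Symbol.terminal Sig.zero]))
    · exact ((prodRule ⟨.T, [.terminal .one, .nonterminal .T]⟩ (by simp [rulesG'])).trans_derives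
        (by exact ih'.append_left [Symbol.terminal Sig.one]))

lemma derB_seg {u : List Sig} {l : Sig} (hu : ∀ c ∈ u, IsBit c)
    (hl : l = Sig.pos ∨ l = Sig.neg) {ω : List Sym}
    (hω : Gp.Derives [Symbol.nonterminal NTm.A] ω) :
    Gp.Derives [Symbol.nonterminal NTm.B] ((u ++ [l]).map Symbol.terminal ++ ω) := by
  have hlast : Gp.Derives [Symbol.nonterminal NTm.B] (Symbol.terminal l :: ω) := by
    rcases hl with rfl | rfl
    · exact ((prodRule ⟨.B, [.terminal .pos, .nonterminal .A]⟩ (by simp [rulesG'])).trans_derives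
        (by exact hω.append_left [Symbol.terminal Sig.pos]))
    · exact ((prodRule ⟨.B, [.terminal .neg, .nonterminal .A]⟩ (by simp [rulesG'])).trans_derives
        (by exact hω.append_left [Symbol.terminal Sig.neg]))
  simpa [Gp] using derB_bits hu hlast

lemma derA_segs {segs : List (List Sig)} (hsegs : ∀ s ∈ segs, IsSegment s) {ω : List Sym}
    (hω : Gp.Derives [Symbol.nonterminal NTm.S] ω) :
    Gp.Derives [Symbol.nonterminal NTm.A] (segs.flatten.map Symbol.terminal ++ ω) := by
  induction segs with
  | nil =>
    exact ((prodRule ⟨.A, [.nonterminal .S]⟩ (by simp [rulesG'])).trans_derives (by simpa [Gp] using hω))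
  | cons s rest ih =>
    obtain ⟨u, l, rfl, hu, hl⟩ := hsegs s (by simp)
    have hrest := ih (fun x hx => hsegs x (by simp [hx]))
    have hB := derB_seg hu hl hrest
    refine ((prodRule ⟨.A, [.nonterminal .B]⟩ (by simp [rulesG'])).trans_derives ?_)
    simpa [Gp] using hB

lemma derT_segs {segs : List (List Sig)} (hne : segs ≠ []) (hsegs : ∀ s ∈ segs, IsSegment s)
    {ω : List Sym} (hω : Gp.Derives [Symbol.nonterminal NTm.S] ω) :
    Gp.Derives [Symbol.nonterminal NTm.T] (segs.flatten.map Symbol.terminal ++ ω) := by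
  match segs, hne with
  | s :: rest, _ =>
    obtain ⟨u, l, rfl, hu, hl⟩ := hsegs s (by simp)
    have hA : Gp.Derives [Symbol.nonterminal NTm.A] (rest.flatten.map Symbol.terminal ++ ω) :=
      derA_segs (fun x hx => hsegs x (by simp [hx])) hω
    have hT : Gp.Derives [Symbol.nonterminal NTm.T]
        (Symbol.terminal l :: (rest.flatten.map Symbol.terminal ++ ω)) := by
      rcases hl with rfl | rfl
      · exact ((prodRule ⟨.T, [.terminal .pos, .nonterminal .A]⟩
          (by simp [rulesG'])).trans_derives
          (by exact hA.append_left [Symbol.terminal Sig.pos]))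
      · exact ((prodRule ⟨.T, [.terminal .neg, .nonterminal .A]⟩
          (by simp [rulesG'])).trans_derives
          (by exact hA.append_left [Symbol.terminal Sig.neg]))
    have := derT_bits hu hT
    simpa [Gp] using this

lemma derS {w : List Sig} (hw : w ∈ L0) :
    Gp.Derives [Symbol.nonterminal NTm.S] (w.map Symbol.terminal) := by
  obtain ⟨bs, hbs, rfl⟩ := hw
  induction bs with
  | nil =>
    simpa [Gp] using (prodRule ⟨.S, []⟩ (by simp [rulesG'])).single
  | cons b rest ih =>
    obtain ⟨segs, hne, hsegs, rfl⟩ := hbs b (by simp)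
    have ihrest := ih (fun x hx => hbs x (by simp [hx]))
    have hT := derT_segs hne hsegs ihrest
    refine ((prodRule ⟨.S, [.terminal .hash, .nonterminal .T]⟩
      (by simp [rulesG'])).trans_derives ?_)
    have := hT.append_left [Symbol.terminal Sig.hash]
    rw [List.flatten_cons, List.cons_append, List.map_cons, List.map_append]
    exact this

end GramProof

/-- The regular grammar G' generates exactly the language L₀. -/
theorem grammar_generates_L0 : ∀ w : List Sig, w ∈ Gp.language ↔ w ∈ L0 := by
  
  intro w
  rw [ContextFreeGrammar.mem_language_iff]
  constructor
  · intro h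
    have h2 := GramProof.derives_sub h (GramProof.self_mem_langL w)
    obtain ⟨x, y, hx, hy, rfl⟩ := h2
    cases (show (y : List Sig) = [] from hy)
    simpa using (show x ∈ L0 from hx)
  · exact fun h => GramProof.derS h
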